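/- Conversely to the previous statement: let X = (X_v, v ∈ V) be a discrete random vector with strictly positive joint distribution and {A,B} a partition of V. If for every subset M ⊆ V intersecting both A and B the highest-order marginal log-linear interaction λ^M_M vanishes identically, then X_A and X_B are independent. -/

import Mathlib

/-!
By strong induction on `M` we show `p_M = p_{M∩A} · p_{M∩B}`. When `M` meets both `A` and `B`,
put `q = p_{M∩A} · p_{M∩B}` and expand `log p_M - log q` by Möbius inversion over the subsets
`L ⊆ M`. The top term `L = M` vanishes: for `log p_M` by hypothesis, and for `log q` because each
of its two summands ignores a coordinate of `M`. Every lower term depends only on the coordinates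
in `L ⊊ M`, where `p_M` and `q` have the same margin by induction, so it has the same mean under
both. Hence `∑ (p_M - q) (log p_M - log q) = 0`, and as every summand is nonnegative, `p_M = q`.
-/

open Finset

/-- The marginal distribution of `p` over the margin `M`, as a function of a full cell
depending only on its `M`-coordinates. -/
noncomputable def marg {V : Type*} [Fintype V] [DecidableEq V] {b : V → ℕ}
    (p : ((v : V) → Fin (b v)) → ℝ) (M : Finset V) (i : (v : V) → Fin (b v)) : ℝ :=
  ∑ k : (v : V) → Fin (b v), if ∀ v ∈ M, k v = i v then p k else 0

/-- The multivariate logistic parameter `η^M = λ^M_M`: the highest-order log-linear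
interaction of the marginal distribution `p_M`, obtained by Möbius inversion of
`log p_M` with baseline cell `(0,...,0)`. -/
noncomputable def mlogit {V : Type*} [Fintype V] [DecidableEq V] {b : V → ℕ}
    (hb : ∀ v, 0 < b v) (p : ((v : V) → Fin (b v)) → ℝ)
    (M : Finset V) (i : (v : V) → Fin (b v)) : ℝ :=
  ∑ L ∈ M.powerset, (-1 : ℝ) ^ (M.card - L.card) *
    Real.log (marg p M (fun v => if v ∈ L then i v else ⟨0, hb v⟩))

open Function

section Moebius

variable {V : Type*}

/-- The `L`-interaction of a set function `g`; `mlogit hb p M i` is the case `L = M` of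
`g K = log p_M (i_K, 0_{M \ K})`, see `mlogit_eq_moebius`. -/
def moebius (g : Finset V → ℝ) (L : Finset V) : ℝ :=
  ∑ K ∈ L.powerset, (-1 : ℝ) ^ (#L - #K) * g K

lemma moebius_sub (f g : Finset V → ℝ) (L : Finset V) :
    moebius (fun K => f K - g K) L = moebius f L - moebius g L := by
  simp only [moebius, mul_sub, sum_sub_distrib]

lemma moebius_insert [DecidableEq V] {a : V} {L : Finset V} (ha : a ∉ L) (g : Finset V → ℝ) :
    moebius g (insert a L) = moebius (fun K => g (insert a K)) L - moebius g L := by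
  rw [moebius, sum_powerset_insert ha, card_insert_of_notMem ha, add_comm, sub_eq_add_neg,
    moebius, moebius, ← sum_neg_distrib]
  congr 1
  · refine sum_congr rfl fun K hK => ?_
    rw [card_insert_of_notMem fun h => ha (mem_powerset.1 hK h), Nat.add_sub_add_right]
  · refine sum_congr rfl fun K hK => ?_
    have := card_le_card (mem_powerset.1 hK)
    rw [show #L + 1 - #K = #L - #K + 1 by omega, pow_succ]
    ring

theorem sum_powerset_moebius [DecidableEq V] (g : Finset V → ℝ) (M : Finset V) :
    ∑ L ∈ M.powerset, moebius g L = g M := by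
  induction M using Finset.induction_on generalizing g with
  | empty => simp [moebius]
  | insert a M ha ih =>
    rw [sum_powerset_insert ha, ← ih fun K => g (insert a K), ← sum_add_distrib]
    refine sum_congr rfl fun L hL => ?_
    rw [moebius_insert fun h => ha (mem_powerset.1 hL h)]
    ring

lemma moebius_insert_eq_zero [DecidableEq V] {a : V} {L : Finset V} (ha : a ∉ L)
    {g : Finset V → ℝ} (hg : ∀ K ⊆ L, g (insert a K) = g K) : moebius g (insert a L) = 0 := by
  rw [moebius_insert ha, sub_eq_zero]
  exact sum_congr rfl fun K hK => congrArg _ (hg K (mem_powerset.1 hK))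

end Moebius

section Cells

variable {V : Type*} [DecidableEq V] {α : V → Type*}

lemma dependsOn_comp_piecewise {β : Type*} {f : (∀ v, α v) → β} {K L : Finset V} (hKL : K ⊆ L)
    (z : ∀ v, α v) : DependsOn (fun j => f (K.piecewise j z)) L := by
  intro i j hij
  exact congrArg f (piecewise_congr _ (fun v hv => hij v (hKL hv)) fun _ _ => rfl)

lemma dependsOn_moebius_piecewise (f : (∀ v, α v) → ℝ) (z : ∀ v, α v) (L : Finset V) :
    DependsOn (fun j => moebius (fun K => f (K.piecewise j z)) L) L := fun _ _ hij =>
  sum_congr rfl fun K hK => by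
    rw [dependsOn_comp_piecewise (f := f) (mem_powerset.1 hK) z hij]

lemma sum_powerset_moebius_piecewise {f : (∀ v, α v) → ℝ} {M : Finset V} (hf : DependsOn f M)
    (z j : ∀ v, α v) : ∑ L ∈ M.powerset, moebius (fun K => f (K.piecewise j z)) L = f j := by
  rw [sum_powerset_moebius]
  exact hf fun v hv => piecewise_eq_of_mem _ _ _ hv

lemma moebius_piecewise_eq_zero {f : (∀ v, α v) → ℝ} {S : Set V} (hf : DependsOn f S)
    {M : Finset V} {a : V} (haM : a ∈ M) (haS : a ∉ S) (z j : ∀ v, α v) :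
    moebius (fun K => f (K.piecewise j z)) M = 0 := by
  rw [← insert_erase haM]
  refine moebius_insert_eq_zero (notMem_erase a M) fun K _ => hf fun v hv => ?_
  exact piecewise_insert_of_ne _ _ _ fun h => haS (h ▸ hv)

lemma forall_mem_union_piecewise_eq_iff {S T : Finset V} (hST : Disjoint S T)
    (k j i : ∀ v, α v) :
    ((∀ v ∈ S, k v = i v) ∧ ∀ v ∈ T, j v = i v) ↔ ∀ v ∈ S ∪ T, S.piecewise k j v = i v := by
  refine ⟨fun ⟨hk, hj⟩ v hv => ?_, fun H => ⟨fun v hv => ?_, fun v hv => ?_⟩⟩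
  · rcases mem_union.1 hv with hvS | hvT
    · rw [piecewise_eq_of_mem _ _ _ hvS, hk v hvS]
    · rw [piecewise_eq_of_notMem _ _ _ (disjoint_right.1 hST hvT), hj v hvT]
  · simpa [hv] using H v (mem_union_left T hv)
  · simpa [disjoint_right.1 hST hv] using H v (mem_union_right S hv)

end Cells

lemma sub_mul_log_sub_nonneg {x y : ℝ} (hx : 0 < x) (hy : 0 < y) :
    0 ≤ (x - y) * (Real.log x - Real.log y) := by
  rcases le_total x y with h | h
  · exact mul_nonneg_of_nonpos_of_nonpos (sub_nonpos.2 h) (sub_nonpos.2 (Real.log_le_log hx h))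
  · exact mul_nonneg (sub_nonneg.2 h) (sub_nonneg.2 (Real.log_le_log hy h))

lemma sub_mul_log_sub_eq_zero_iff {x y : ℝ} (hx : 0 < x) (hy : 0 < y) :
    (x - y) * (Real.log x - Real.log y) = 0 ↔ x = y := by
  rw [mul_eq_zero, sub_eq_zero, sub_eq_zero]
  exact ⟨fun h => h.elim id (Real.log_injOn_pos hx hy), Or.inl⟩

lemma eq_of_sum_sub_mul_log_sub_eq_zero {ι : Type*} [Fintype ι] {x y : ι → ℝ}
    (hx : ∀ i, 0 < x i) (hy : ∀ i, 0 < y i)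
    (h : ∑ i, (x i - y i) * (Real.log (x i) - Real.log (y i)) = 0) : x = y := by
  funext i
  rw [← sub_mul_log_sub_eq_zero_iff (hx i) (hy i)]
  exact (sum_eq_zero_iff_of_nonneg fun j _ => sub_mul_log_sub_nonneg (hx j) (hy j)).1 h i
    (mem_univ i)

section Marginals

variable {V : Type*} [Fintype V] [DecidableEq V] {b : V → ℕ}

lemma dependsOn_marg (p : (∀ v, Fin (b v)) → ℝ) (M : Finset V) : DependsOn (marg p M) M := by
  intro i j hij
  have (k : ∀ v, Fin (b v)) : (∀ v ∈ M, k v = i v) ↔ ∀ v ∈ M, k v = j v :=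
    forall₂_congr fun v hv => by rw [hij v hv]
  simp only [marg, this]

lemma marg_pos {p : (∀ v, Fin (b v)) → ℝ} (hpos : ∀ i, 0 < p i) (M : Finset V)
    (i : ∀ v, Fin (b v)) : 0 < marg p M i :=
  sum_pos' (fun k _ => by split_ifs <;> simp [(hpos k).le])
    ⟨i, mem_univ i, by simpa using hpos i⟩

lemma marg_empty {p : (∀ v, Fin (b v)) → ℝ} (hsum : ∑ i, p i = 1) : marg p ∅ = 1 := by
  funext i
  simpa [marg] using hsum

lemma marg_univ (p : (∀ v, Fin (b v)) → ℝ) : marg p univ = p := by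
  funext i
  simp [marg, ← funext_iff]

lemma card_filter_forall_mem_eq (T : Finset V) (r : ∀ v, Fin (b v)) :
    #(univ.filter fun i : (∀ v, Fin (b v)) => ∀ v ∈ T, r v = i v) = ∏ v ∈ Tᶜ, b v := by
  have : (univ.filter fun i : (∀ v, Fin (b v)) => ∀ v ∈ T, r v = i v)
      = Fintype.piFinset fun v => if v ∈ T then {r v} else univ := by
    ext i
    simp only [mem_filter, mem_univ, true_and, Fintype.mem_piFinset]
    refine forall_congr' fun v => ?_
    split_ifs with hv <;> simp [hv, eq_comm]
  rw [this, Fintype.card_piFinset, ← prod_compl_mul_prod T,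
    prod_eq_one (s := T) fun v hv => by simp [hv], mul_one]
  exact prod_congr rfl fun v hv => by simp [mem_compl.1 hv]

lemma sum_ite_forall_mem_eq {T : Finset V} {h : (∀ v, Fin (b v)) → ℝ} (hh : DependsOn h T)
    (r : ∀ v, Fin (b v)) :
    ∑ i, (if ∀ v ∈ T, r v = i v then h i else 0) = (∏ v ∈ Tᶜ, (b v : ℝ)) * h r := by
  rw [← sum_filter, sum_congr rfl (g := fun _ => h r) fun i hi => hh fun v hv =>
    ((mem_filter.1 hi).2 v hv).symm, sum_const, nsmul_eq_mul, card_filter_forall_mem_eq,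
    Nat.cast_prod]

/-- Sums run over full cells, so each `T`-cell is counted `∏ v ∈ Tᶜ, b v` times. -/
lemma sum_marg_mul (w : (∀ v, Fin (b v)) → ℝ) {T : Finset V} {h : (∀ v, Fin (b v)) → ℝ}
    (hh : DependsOn h T) :
    ∑ i, marg w T i * h i = (∏ v ∈ Tᶜ, (b v : ℝ)) * ∑ k, w k * h k := by
  simp only [marg, sum_mul, ite_mul, zero_mul]
  rw [sum_comm, mul_sum]
  exact sum_congr rfl fun k _ =>
    sum_ite_forall_mem_eq (h := fun i => w k * h i) (fun i j hij => congrArg _ (hh hij)) k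

/-- `p_S · p_T` is, up to counting, the law of `S.piecewise X X'` for independent `X, X' ∼ p`. -/
lemma sum_marg_mul_marg_mul (p : (∀ v, Fin (b v)) → ℝ) {S T : Finset V} (hST : Disjoint S T)
    {h : (∀ v, Fin (b v)) → ℝ} (hh : DependsOn h ↑(S ∪ T)) :
    ∑ i, marg p S i * marg p T i * h i
      = (∏ v ∈ (S ∪ T)ᶜ, (b v : ℝ)) * ∑ k, ∑ j, p k * p j * h (S.piecewise k j) := by
  have hfiber (k j : ∀ v, Fin (b v)) :
      ∑ i, (if ∀ v ∈ S, k v = i v then p k else 0) * (if ∀ v ∈ T, j v = i v then p j else 0) * h i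
        = (∏ v ∈ (S ∪ T)ᶜ, (b v : ℝ)) * (p k * p j * h (S.piecewise k j)) := by
    rw [← sum_ite_forall_mem_eq (h := fun i => p k * p j * h i) fun _ _ hij => congrArg _ (hh hij)]
    refine sum_congr rfl fun i _ => ?_
    simp only [← forall_mem_union_piecewise_eq_iff hST, ite_and]
    split_ifs <;> ring
  calc ∑ i, marg p S i * marg p T i * h i
      = ∑ i, ∑ k, ∑ j, (if ∀ v ∈ S, k v = i v then p k else 0) *
          (if ∀ v ∈ T, j v = i v then p j else 0) * h i := by
        simp only [marg, sum_mul_sum]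
        simp only [sum_mul]
    _ = ∑ k, ∑ j, ∑ i, (if ∀ v ∈ S, k v = i v then p k else 0) *
          (if ∀ v ∈ T, j v = i v then p j else 0) * h i := by
        rw [sum_comm]
        exact sum_congr rfl fun _ _ => sum_comm
    _ = _ := by simp only [hfiber, mul_sum]

lemma sum_mul_eq_sum_sum_piecewise (hb : ∀ v, 0 < b v) {p : (∀ v, Fin (b v)) → ℝ}
    {S T : Finset V} (hST : Disjoint S T) (hfac : marg p (S ∪ T) = marg p S * marg p T)
    {h : (∀ v, Fin (b v)) → ℝ} (hh : DependsOn h ↑(S ∪ T)) :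
    ∑ k, p k * h k = ∑ k, ∑ j, p k * p j * h (S.piecewise k j) := by
  have hN : ∏ v ∈ (S ∪ T)ᶜ, (b v : ℝ) ≠ 0 :=
    prod_ne_zero_iff.2 fun v _ => Nat.cast_ne_zero.2 (hb v).ne'
  refine mul_left_cancel₀ hN ?_
  simp only [← sum_marg_mul p hh, ← sum_marg_mul_marg_mul p hST hh, hfac, Pi.mul_apply]

lemma sum_marg_union_mul_eq (hb : ∀ v, 0 < b v) {p : (∀ v, Fin (b v)) → ℝ}
    {S T S' T' : Finset V} (hST : Disjoint S T) (hS' : S' ⊆ S) (hT' : T' ⊆ T)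
    (hfac : marg p (S' ∪ T') = marg p S' * marg p T') {h : (∀ v, Fin (b v)) → ℝ}
    (hh : DependsOn h ↑(S' ∪ T')) :
    ∑ i, marg p (S ∪ T) i * h i = ∑ i, marg p S i * marg p T i * h i := by
  have hsub : ((S' ∪ T' : Finset V) : Set V) ⊆ ↑(S ∪ T) := by
    exact_mod_cast union_subset_union hS' hT'
  rw [sum_marg_mul p (hh.mono hsub), sum_marg_mul_marg_mul p hST (hh.mono hsub),
    sum_mul_eq_sum_sum_piecewise hb (hST.mono hS' hT') hfac hh]
  congr 1
  refine sum_congr rfl fun k _ => sum_congr rfl fun j _ => congrArg _ (hh fun v hv => ?_)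
  rcases mem_union.1 (mem_coe.1 hv) with hvS | hvT
  · simp [hvS, hS' hvS]
  · simp [disjoint_right.1 (hST.mono hS' hT') hvT, disjoint_right.1 hST (hT' hvT)]

end Marginals

section Factorization

variable {V : Type*} [Fintype V] [DecidableEq V] {b : V → ℕ}

lemma mlogit_eq_moebius (hb : ∀ v, 0 < b v) (p : (∀ v, Fin (b v)) → ℝ) (M : Finset V)
    (i : ∀ v, Fin (b v)) :
    mlogit hb p M i = moebius (fun K => Real.log (marg p M (K.piecewise i fun v => ⟨0, hb v⟩))) M :=
  rfl

lemma marg_union_eq_mul_of_mlogit_eq_zero (hb : ∀ v, 0 < b v) {p : (∀ v, Fin (b v)) → ℝ}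
    (hpos : ∀ i, 0 < p i) {S T : Finset V} (hST : Disjoint S T) (hS : S.Nonempty)
    (hT : T.Nonempty) (hlower : ∀ L ⊂ S ∪ T, marg p L = marg p (L ∩ S) * marg p (L ∩ T))
    (hzero : ∀ i, mlogit hb p (S ∪ T) i = 0) :
    marg p (S ∪ T) = marg p S * marg p T := by
  set M := S ∪ T
  let z : ∀ v, Fin (b v) := fun v => ⟨0, hb v⟩
  let D (j : ∀ v, Fin (b v)) : ℝ :=
    Real.log (marg p M j) - Real.log (marg p S j) - Real.log (marg p T j)
  let lam (L : Finset V) (j : ∀ v, Fin (b v)) : ℝ := moebius (fun K => D (K.piecewise j z)) L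
  have hD : DependsOn D M := fun i j hij => by
    simp only [D, dependsOn_marg p M hij,
      dependsOn_marg p S fun v hv => hij v (subset_union_left hv),
      dependsOn_marg p T fun v hv => hij v (subset_union_right hv)]
  have htop (j) : lam M j = 0 := by
    obtain ⟨s, hs⟩ := hS
    obtain ⟨t, ht⟩ := hT
    simp only [lam, D, moebius_sub]
    rw [← mlogit_eq_moebius, hzero,
      moebius_piecewise_eq_zero (fun _ _ hij => congrArg Real.log (dependsOn_marg p S hij))
        (mem_union_right S ht) (disjoint_right.1 hST ht),
      moebius_piecewise_eq_zero (fun _ _ hij => congrArg Real.log (dependsOn_marg p T hij))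
        (mem_union_left T hs) (disjoint_left.1 hST hs)]
    ring
  have hlow (L) (hL : L ⊂ M) :
      ∑ j, marg p M j * lam L j = ∑ j, marg p S j * marg p T j * lam L j := by
    have hL' : L ∩ S ∪ L ∩ T = L := by rw [← inter_union_distrib_left, inter_eq_left.2 hL.subset]
    refine sum_marg_union_mul_eq hb hST (inter_subset_right (s₁ := L))
      (inter_subset_right (s₁ := L)) ?_ ?_
    · rw [hL']
      exact hlower L hL
    · rw [hL']
      exact dependsOn_moebius_piecewise D z L
  have hsum : ∑ j, (marg p M j - marg p S j * marg p T j) * D j = 0 := by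
    calc ∑ j, (marg p M j - marg p S j * marg p T j) * D j
        = ∑ j, ∑ L ∈ M.powerset, (marg p M j - marg p S j * marg p T j) * lam L j :=
          sum_congr rfl fun j _ => by rw [← mul_sum, sum_powerset_moebius_piecewise hD z j]
      _ = ∑ L ∈ M.powerset, ∑ j, (marg p M j - marg p S j * marg p T j) * lam L j := sum_comm
      _ = 0 := sum_eq_zero fun L hL => ?_
    rcases (mem_powerset.1 hL).eq_or_ssubset with rfl | hLM
    · simp [htop]
    · simp only [sub_mul, sum_sub_distrib, hlow L hLM, sub_self]
  refine eq_of_sum_sub_mul_log_sub_eq_zero (marg_pos hpos M)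
    (fun j => mul_pos (marg_pos hpos S j) (marg_pos hpos T j)) ?_
  rw [← hsum]
  refine sum_congr rfl fun j _ => ?_
  simp only [Pi.mul_apply, D, Real.log_mul (marg_pos hpos S j).ne' (marg_pos hpos T j).ne']
  ring

theorem marg_eq_mul_marg_inter (hb : ∀ v, 0 < b v) {p : (∀ v, Fin (b v)) → ℝ}
    (hpos : ∀ i, 0 < p i) (hsum : ∑ i, p i = 1) {A B : Finset V} (hdisj : Disjoint A B)
    (hcover : A ∪ B = univ)
    (hzero : ∀ M : Finset V, (M ∩ A).Nonempty → (M ∩ B).Nonempty → ∀ i, mlogit hb p M i = 0)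
    (M : Finset V) : marg p M = marg p (M ∩ A) * marg p (M ∩ B) := by
  induction M using Finset.strongInduction with
  | H M ih =>
  have hM : M ∩ A ∪ M ∩ B = M := by rw [← inter_union_distrib_left, hcover, inter_univ]
  rcases (M ∩ A).eq_empty_or_nonempty with hA | hA
  · rw [hA, empty_union] at hM
    rw [hA, hM, marg_empty hsum, one_mul]
  rcases (M ∩ B).eq_empty_or_nonempty with hB | hB
  · rw [hB, union_empty] at hM
    rw [hB, hM, marg_empty hsum, mul_one]
  have hlower (L) (hL : L ⊂ M ∩ A ∪ M ∩ B) :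
      marg p L = marg p (L ∩ (M ∩ A)) * marg p (L ∩ (M ∩ B)) := by
    rw [hM] at hL
    simp only [← inter_assoc, inter_eq_left.2 hL.subset]
    exact ih L hL
  have hfac := marg_union_eq_mul_of_mlogit_eq_zero hb hpos
    (hdisj.mono inter_subset_right inter_subset_right) hA hB hlower
    (by rw [hM]; exact hzero M hA hB)
  rwa [hM] at hfac

end Factorization

/-- conversely, if `{A, B}` partitions `V` and for every `M` intersecting
both `A` and `B` the multivariate logistic parameter `η^M = λ^M_M` vanishes identically,
then `X_A ⊥ X_B`. -/
theorem stmt10 {V : Type*} [Fintype V] [DecidableEq V] {b : V → ℕ} (hb : ∀ v, 0 < b v)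
    (p : ((v : V) → Fin (b v)) → ℝ) (hpos : ∀ i, 0 < p i) (hsum : ∑ i, p i = 1)
    (A B : Finset V) (hdisj : Disjoint A B) (hcover : A ∪ B = Finset.univ)
    (hzero : ∀ M : Finset V, (M ∩ A).Nonempty → (M ∩ B).Nonempty →
      ∀ i, mlogit hb p M i = 0) :
    ∀ i, p i = marg p A i * marg p B i := by
  intro i
  simpa [marg_univ] using congrFun (marg_eq_mul_marg_inter hb hpos hsum hdisj hcover hzero univ) i
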